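/- arXiv:math/0506240 — 5 statements merged into one kernel-verified Lean document; each statement's English description precedes it below -/
import Mathlib

section
/- Every equilateral set in a finite-dimensional normed space is antipodal: if S is a set of points in an n-dimensional normed space with all pairwise distances equal to λ > 0, then for any two distinct x, y ∈ S, the point x − y lies on the boundary of the convex hull of S − S. -/
open Pointwise

/-! Every nonzero element of `S - S` has norm `λ`, so `conv (S - S)` lies in the closed ball of
radius `λ`. Its interior therefore lies in the open ball, which misses every `x - y` with
`x ≠ y`. -/

theorem mem_frontier_convexHull_of_forall_norm_le {E : Type*} [NormedAddCommGroup E]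
    [NormedSpace ℝ E] {T : Set E} {z : E} (hzT : z ∈ T) (hz : z ≠ 0)
    (hmax : ∀ w ∈ T, ‖w‖ ≤ ‖z‖) : z ∈ frontier (convexHull ℝ T) := by
  have hT : convexHull ℝ T ⊆ Metric.closedBall 0 ‖z‖ :=
    convexHull_min (fun w hw ↦ mem_closedBall_zero_iff.2 (hmax w hw)) (convex_closedBall _ _)
  refine ⟨subset_closure (subset_convexHull ℝ T hzT), fun hint ↦ ?_⟩
  have hball := interior_mono hT hint
  rw [interior_closedBall _ (norm_ne_zero_iff.2 hz), mem_ball_zero_iff] at hball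
  exact lt_irrefl _ hball

theorem equilateral_antipodal_general {E : Type*} [NormedAddCommGroup E] [NormedSpace ℝ E]
    (S : Set E) (lam : ℝ)
    (heq : ∀ x ∈ S, ∀ y ∈ S, x ≠ y → ‖x - y‖ = lam) :
    ∀ x ∈ S, ∀ y ∈ S, x ≠ y → x - y ∈ frontier (convexHull ℝ (S - S)) := by
  intro x hx y hy hxy
  refine mem_frontier_convexHull_of_forall_norm_le (Set.sub_mem_sub hx hy) (sub_ne_zero.2 hxy) ?_
  rintro _ ⟨a, ha, b, hb, rfl⟩
  rcases eq_or_ne a b with rfl | hab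
  · simp
  · rw [heq a ha b hb hab, heq x hx y hy hxy]

/-- Every equilateral set in a finite-dimensional normed space is antipodal:
each difference `x - y` of distinct points of `S` lies on the boundary of
the convex hull of `S - S`. -/
theorem equilateral_antipodal {E : Type*} [NormedAddCommGroup E] [NormedSpace ℝ E]
    [FiniteDimensional ℝ E] (S : Set E) (lam : ℝ) (hlam : 0 < lam)
    (heq : ∀ x ∈ S, ∀ y ∈ S, x ≠ y → ‖x - y‖ = lam) :
    ∀ x ∈ S, ∀ y ∈ S, x ≠ y → x - y ∈ frontier (convexHull ℝ (S - S)) :=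
  equilateral_antipodal_general S lam heq
end

section
/- A set S ⊆ ℝ^n is antipodal if and only if for any two distinct points x, y ∈ S, the point x − y lies on the boundary of conv(S − S). -/
open Pointwise

/-- `S ⊆ ℝⁿ` is antipodal if any two distinct points `x, y ∈ S` lie on two parallel
hyperplanes bounding a closed slab containing `S`. -/
def IsAntipodal {n : ℕ} (S : Set (Fin n → ℝ)) : Prop :=
  ∀ x ∈ S, ∀ y ∈ S, x ≠ y → ∃ f : (Fin n → ℝ) →ₗ[ℝ] ℝ, f ≠ 0 ∧
    ∀ z ∈ S, f x ≤ f z ∧ f z ≤ f y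

/-- If `w` is in a convex set `C` with an interior point `v`, and a continuous linear
functional `f` satisfies `f < c` on the interior of `C`, then `f w ≤ c`. -/
lemma le_of_lt_on_interior {n : ℕ} {C : Set (Fin n → ℝ)} (hC : Convex ℝ C)
    {f : (Fin n → ℝ) →L[ℝ] ℝ} {c : ℝ} {v w : Fin n → ℝ} (hv : v ∈ interior C)
    (hw : w ∈ C) (hf : ∀ a ∈ interior C, f a < c) : f w ≤ c := by
  have hmem : ∀ t : ℝ, t ∈ Set.Ioc (0:ℝ) 1 → w + t • (v - w) ∈ interior C := by
    intro t ht
    have := hC.add_smul_mem_interior' (subset_closure hw) (x := w) (y := v - w) ?_ ht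
    · exact this
    · simpa using hv
  have htend : Filter.Tendsto (fun t : ℝ => f (w + t • (v - w))) (nhdsWithin 0 (Set.Ioi 0))
      (nhds (f w)) := by
    have hcont : Continuous fun t : ℝ => f (w + t • (v - w)) :=
      f.continuous.comp (continuous_const.add (continuous_id.smul continuous_const))
    have := hcont.tendsto 0
    simp only [zero_smul, add_zero] at this
    exact this.mono_left nhdsWithin_le_nhds
  refine le_of_tendsto htend ?_
  filter_upwards [Ioc_mem_nhdsGT_of_mem (Set.left_mem_Ico.2 one_pos)] with t ht
  exact (hf _ (hmem t ht)).le

/-- A set `S ⊆ ℝⁿ` is antipodal iff for any two distinct `x, y ∈ S` the point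
`x - y` lies on the boundary of `conv (S - S)`. -/
theorem isAntipodal_iff_sub_mem_frontier {n : ℕ} (S : Set (Fin n → ℝ)) :
    IsAntipodal S ↔
      ∀ x ∈ S, ∀ y ∈ S, x ≠ y → x - y ∈ frontier (convexHull ℝ (S - S)) := by
  constructor
  · intro h x hx y hy hxy
    obtain ⟨f, hf0, hf⟩ := h x hx y hy hxy
    have hmemSS : x - y ∈ S - S := ⟨x, hx, y, hy, rfl⟩
    have hmem : x - y ∈ convexHull ℝ (S - S) := subset_convexHull ℝ _ hmemSS
    refine ⟨subset_closure hmem, ?_⟩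
    intro hint
    -- `f (x - y)` is the minimum of `f` on the convex hull
    have hmin : ∀ w ∈ convexHull ℝ (S - S), f (x - y) ≤ f w := by
      intro w hw
      have hsub : convexHull ℝ (S - S) ⊆ {w | f (x - y) ≤ f w} := by
        apply convexHull_min
        · rintro _ ⟨a, ha, b, hb, rfl⟩
          have h1 := (hf a ha).1
          have h2 := (hf b hb).2
          simp only [Set.mem_setOf_eq, map_sub]
          linarith
        · exact convex_halfSpace_ge f.isLinear _
      exact hsub hw
    -- get a direction with positive value
    obtain ⟨u, hu⟩ : ∃ u, f u ≠ 0 := by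
      by_contra hc
      push_neg at hc
      exact hf0 (LinearMap.ext fun u => by simp [hc u])
    obtain ⟨v, hv⟩ : ∃ v, 0 < f v := by
      rcases lt_or_gt_of_ne hu with h' | h'
      · exact ⟨-u, by simpa using h'⟩
      · exact ⟨u, h'⟩
    have hvne : v ≠ 0 := fun h0 => by simp [h0] at hv
    obtain ⟨ε, hε, hball⟩ := Metric.mem_nhds_iff.1 (mem_interior_iff_mem_nhds.1 hint)
    set t : ℝ := ε / (2 * ‖v‖) with ht
    have hvnorm : 0 < ‖v‖ := norm_pos_iff.2 hvne
    have htpos : 0 < t := div_pos hε (by positivity)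
    have hp : (x - y) - t • v ∈ convexHull ℝ (S - S) := by
      apply hball
      simp only [Metric.mem_ball, dist_eq_norm]
      have heq : x - y - t • v - (x - y) = -(t • v) := by abel
      rw [heq, norm_neg, norm_smul, Real.norm_eq_abs, abs_of_pos htpos]
      have h2 : t * ‖v‖ = ε / 2 := by
        rw [ht]; field_simp
      rw [h2]; linarith
    have := hmin _ hp
    simp only [map_sub, map_smul, smul_eq_mul] at this
    nlinarith
  · intro h x hx y hy hxy
    have hC : Convex ℝ (convexHull ℝ (S - S)) := convex_convexHull ℝ _
    have hmemSS : x - y ∈ S - S := ⟨x, hx, y, hy, rfl⟩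
    by_cases hne : (interior (convexHull ℝ (S - S))).Nonempty
    · obtain ⟨hcl, hnotint⟩ := h x hx y hy hxy
      obtain ⟨f, hf⟩ := geometric_hahn_banach_open_point hC.interior isOpen_interior hnotint
      obtain ⟨v, hv⟩ := hne
      -- f ≤ f (x - y) on the whole hull
      have hle : ∀ w ∈ convexHull ℝ (S - S), f w ≤ f (x - y) :=
        fun w hw => le_of_lt_on_interior hC hv hw hf
      refine ⟨-f.toLinearMap, ?_, ?_⟩
      · intro h0
        have hfv : f v < f (x - y) := hf v hv
        have : f ((x - y) - v) = 0 := by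
          have := congrArg (fun g => g ((x - y) - v)) h0
          simp only [LinearMap.neg_apply, ContinuousLinearMap.coe_coe, LinearMap.zero_apply,
            neg_eq_zero] at this
          exact this
        rw [map_sub] at this
        linarith
      · intro z hz
        have h1 : f (x - z) ≤ f (x - y) :=
          hle _ (subset_convexHull ℝ _ ⟨x, hx, z, hz, rfl⟩)
        have h2 : f (z - y) ≤ f (x - y) :=
          hle _ (subset_convexHull ℝ _ ⟨z, hz, y, hy, rfl⟩)
        rw [map_sub] at h1 h2
        have hxy' : f (x - y) = f x - f y := map_sub f x y
        constructor
        · simp only [LinearMap.neg_apply, ContinuousLinearMap.coe_coe]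
          linarith
        · simp only [LinearMap.neg_apply, ContinuousLinearMap.coe_coe]
          linarith
    · -- degenerate case: the hull has empty interior, so `S - S` spans a proper subspace
      have hspan : affineSpan ℝ (convexHull ℝ (S - S)) ≠ ⊤ := by
        intro htop
        exact hne (hC.interior_nonempty_iff_affineSpan_eq_top.2 htop)
      rw [affineSpan_convexHull] at hspan
      have hSSne : (S - S).Nonempty := ⟨_, hmemSS⟩
      have hvs : vectorSpan ℝ (S - S) ≠ ⊤ := by
        intro htop
        exact hspan
          ((AffineSubspace.affineSpan_eq_top_iff_vectorSpan_eq_top_of_nonempty ℝ _ _ hSSne).2 htop)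
      have h0mem : (0 : Fin n → ℝ) ∈ S - S := by
        obtain ⟨a, ha, b, hb, hab⟩ := hmemSS
        exact ⟨a, ha, a, ha, by simp⟩
      have hsub : Submodule.span ℝ (S - S) ≤ vectorSpan ℝ (S - S) := by
        rw [Submodule.span_le]
        intro w hw
        have : w - 0 ∈ vectorSpan ℝ (S - S) :=
          vsub_mem_vectorSpan ℝ hw h0mem
        simpa using this
      have hlt : Submodule.span ℝ (S - S) < ⊤ :=
        lt_of_le_of_lt hsub (lt_top_iff_ne_top.2 hvs)
      obtain ⟨f, hf0, hfk⟩ :=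
        (Submodule.span ℝ (S - S)).exists_dual_map_eq_bot_of_lt_top hlt inferInstance
      refine ⟨f, hf0, ?_⟩
      have hvanish : ∀ w ∈ S - S, f w = 0 := by
        intro w hw
        have : f w ∈ Submodule.map f (Submodule.span ℝ (S - S)) :=
          ⟨w, Submodule.subset_span hw, rfl⟩
        rw [hfk] at this
        simpa using this
      intro z hz
      have h1 : f (x - z) = 0 := hvanish _ ⟨x, hx, z, hz, rfl⟩
      have h2 : f (z - y) = 0 := hvanish _ ⟨z, hz, y, hy, rfl⟩
      rw [map_sub] at h1 h2
      constructor <;> linarith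
end

section
/- Let S = {a, b, c, d, e} ⊆ ℝ³ be an antipodal set such that the open segment (d, e) meets the interior of conv S. Then the plane through a parallel to the plane bcd supports conv S at a. -/
/-!
Pushing a point `p ∈ (d, e) ∩ int conv S` slightly away from `a` keeps it in `conv S`, and writing
the new point as a convex combination of `S` gives a relation
`μa • (a - d) + μb • (b - d) + μc • (c - d) = μe • (e - d)` with `μa > 0` and `μb, μc ≥ 0`.
Testing it against the antipodal functionals maximal at `d` and at `a` gives `μe > 0` and
`μa ≤ μe`; these are strict because no nonzero functional is constant on a set whose hull has
interior points. For `f` constant on `b, c, d` with `f d ≤ f a` the relation then reads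
`μa * (f a - f d) = μe * (f e - f d)`, so `f e ≤ f a`.
-/

open Set Filter Topology Module

theorem exists_pos_add_smul_mem_of_mem_interior {E : Type*} [AddCommGroup E] [Module ℝ E]
    [TopologicalSpace E] [ContinuousAdd E] [ContinuousSMul ℝ E] {s : Set E} {p : E}
    (hp : p ∈ interior s) (v : E) : ∃ θ : ℝ, 0 < θ ∧ p + θ • v ∈ s := by
  have hcont : Tendsto (fun θ : ℝ => p + θ • v) (𝓝 0) (𝓝 p) := by
    have : Continuous fun θ : ℝ => p + θ • v := by fun_prop
    simpa using this.tendsto 0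
  have hev : ∀ᶠ θ in 𝓝[>] (0 : ℝ), p + θ • v ∈ s :=
    (hcont.eventually_mem (mem_interior_iff_mem_nhds.1 hp)).filter_mono nhdsWithin_le_nhds
  obtain ⟨θ, hθs, hθ⟩ := (hev.and self_mem_nhdsWithin).exists
  exact ⟨θ, hθ, hθs⟩

theorem mem_convexHull_range_iff_exists_stdSimplex {R ι E : Type*} [Field R] [LinearOrder R]
    [IsStrictOrderedRing R] [Fintype ι] [AddCommGroup E] [Module R E] {v : ι → E} {x : E} :
    x ∈ convexHull R (range v) ↔ ∃ w ∈ stdSimplex R ι, ∑ i, w i • v i = x := by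
  classical
  have hv : range v =
      Fintype.linearCombination R v '' range fun i j : ι => if i = j then (1 : R) else 0 := by
    rw [← range_comp]; congr 1; ext i; simp [Fintype.linearCombination_apply]
  rw [hv, ← LinearMap.image_convexHull, convexHull_basis_eq_stdSimplex]
  simp [Fintype.linearCombination_apply]

theorem LinearMap.eq_zero_of_forall_apply_eq_of_interior_convexHull_nonempty
    {E : Type*} [NormedAddCommGroup E] [NormedSpace ℝ E] [FiniteDimensional ℝ E]
    {S : Set E} (hS : (interior (convexHull ℝ S)).Nonempty) {f : E →ₗ[ℝ] ℝ} {c : ℝ}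
    (hf : ∀ z ∈ S, f z = c) : f = 0 := by
  by_contra hf0
  have hopen : IsOpenMap f := f.isOpenMap_of_finiteDimensional (f.surjective_iff_ne_zero.2 hf0)
  have hsub : convexHull ℝ S ⊆ f ⁻¹' {c} :=
    convexHull_min hf (convex_hyperplane f.isLinear c)
  have hint := interior_mono hsub
  rw [← hopen.preimage_interior_eq_interior_preimage f.continuous_of_finiteDimensional,
    interior_singleton, preimage_empty, subset_empty_iff] at hint
  exact hS.ne_empty hint

theorem exists_ne_zero_apply_eq_zero_of_two_lt_finrank {K E : Type*} [Field K] [AddCommGroup E]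
    [Module K E] [FiniteDimensional K E] (hE : 2 < finrank K E) (u v : E) :
    ∃ f : E →ₗ[K] K, f ≠ 0 ∧ f u = 0 ∧ f v = 0 := by
  let L : Dual K E →ₗ[K] K × K := (LinearMap.applyₗ u).prod (LinearMap.applyₗ v)
  have hL : LinearMap.ker L ≠ ⊥ := LinearMap.ker_ne_bot_of_finrank_lt <| by
    rwa [Subspace.dual_finrank_eq, finrank_prod, finrank_self]
  obtain ⟨f, hfL, hf0⟩ := (Submodule.ne_bot_iff _).1 hL
  exact ⟨f, hf0, by simpa [L] using hfL⟩

theorem exists_ne_zero_apply_eq_apply_le {K E : Type*} [Field K] [LinearOrder K]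
    [IsStrictOrderedRing K] [AddCommGroup E] [Module K E] [FiniteDimensional K E]
    (hE : 2 < finrank K E) (a b c d : E) :
    ∃ f : E →ₗ[K] K, f ≠ 0 ∧ f b = f c ∧ f c = f d ∧ f d ≤ f a := by
  obtain ⟨f, hf0, hfc, hfd⟩ := exists_ne_zero_apply_eq_zero_of_two_lt_finrank hE (c - b) (d - b)
  rw [map_sub, sub_eq_zero] at hfc hfd
  rcases le_total (f d) (f a) with hle | hle
  · exact ⟨f, hf0, hfc.symm, hfc.trans hfd.symm, hle⟩
  · exact ⟨-f, neg_ne_zero.2 hf0, by simp [hfc], by simp [hfc, hfd], by simpa using hle⟩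

theorem exists_smul_sub_relation_of_mem_openSegment {E : Type*} [AddCommGroup E] [Module ℝ E]
    [TopologicalSpace E] [ContinuousAdd E] [ContinuousSMul ℝ E] {a b c d e p : E}
    (hpde : p ∈ openSegment ℝ d e) (hp : p ∈ interior (convexHull ℝ {a, b, c, d, e})) :
    ∃ μa μb μc μe : ℝ, 0 < μa ∧ 0 ≤ μb ∧ 0 ≤ μc ∧
      μa • (a - d) + μb • (b - d) + μc • (c - d) = μe • (e - d) := by
  obtain ⟨θ, hθ, hx⟩ := exists_pos_add_smul_mem_of_mem_interior hp (p - a)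
  have hrange : ({a, b, c, d, e} : Set E) = range ![a, b, c, d, e] := by
    simp only [Matrix.range_cons, Matrix.range_empty, union_empty, singleton_union]
  rw [hrange, mem_convexHull_range_iff_exists_stdSimplex] at hx
  obtain ⟨w, ⟨hw0, hw1⟩, hwx⟩ := hx
  simp only [Fin.sum_univ_five, Matrix.cons_val] at hw1 hwx
  obtain ⟨t, t', -, -, htt, rfl⟩ := hpde
  -- subtract `(1 + θ) • d` from `(1 + θ) • p = θ • a + ∑ i, w i • ![a, b, c, d, e] i`
  refine ⟨θ + w 0, w 1, w 2, (1 + θ) * t' - w 4, by linarith [hw0 0], hw0 1, hw0 2, ?_⟩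
  linear_combination (norm := module) hwx - hw1 • d + (1 + θ) • htt • d

section Relation

variable {E : Type*} [AddCommGroup E] [Module ℝ E] {a b c d e : E} {μa μb μc μe : ℝ}

theorem apply_smul_sub_relation
    (hrel : μa • (a - d) + μb • (b - d) + μc • (c - d) = μe • (e - d)) (g : E →ₗ[ℝ] ℝ) :
    μa * (g a - g d) + μb * (g b - g d) + μc * (g c - g d) = μe * (g e - g d) := by
  simpa using congrArg g hrel

theorem pos_of_smul_sub_relation
    (hrel : μa • (a - d) + μb • (b - d) + μc • (c - d) = μe • (e - d))
    (hμa : 0 < μa) (hμb : 0 ≤ μb) (hμc : 0 ≤ μc) {g : E →ₗ[ℝ] ℝ}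
    (hga : g a < g d) (hgb : g b ≤ g d) (hgc : g c ≤ g d) (hge : g e ≤ g d) : 0 < μe := by
  have hrelg := apply_smul_sub_relation hrel g
  by_contra! hμe
  nlinarith [mul_pos hμa (sub_pos.2 hga), mul_nonneg hμb (sub_nonneg.2 hgb),
    mul_nonneg hμc (sub_nonneg.2 hgc), mul_nonneg (neg_nonneg.2 hμe) (sub_nonneg.2 hge)]

theorem le_of_smul_sub_relation
    (hrel : μa • (a - d) + μb • (b - d) + μc • (c - d) = μe • (e - d))
    (hμb : 0 ≤ μb) (hμc : 0 ≤ μc) (hμe : 0 ≤ μe) {g : E →ₗ[ℝ] ℝ}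
    (hgd : g d < g a) (hgb : g d ≤ g b) (hgc : g d ≤ g c) (hge : g e ≤ g a) : μa ≤ μe := by
  have hrelg := apply_smul_sub_relation hrel g
  by_contra! hμae
  nlinarith [mul_pos (sub_pos.2 hμae) (sub_pos.2 hgd), mul_nonneg hμb (sub_nonneg.2 hgb),
    mul_nonneg hμc (sub_nonneg.2 hgc), mul_nonneg hμe (sub_nonneg.2 hge)]

theorem apply_le_of_smul_sub_relation
    (hrel : μa • (a - d) + μb • (b - d) + μc • (c - d) = μe • (e - d))
    (hμe : 0 < μe) (hμae : μa ≤ μe) {f : E →ₗ[ℝ] ℝ}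
    (hfb : f b = f d) (hfc : f c = f d) (hfd : f d ≤ f a) : f e ≤ f a := by
  have hrelf := apply_smul_sub_relation hrel f
  rw [hfb, hfc, sub_self, mul_zero, mul_zero, add_zero, add_zero] at hrelf
  nlinarith [mul_nonneg (sub_nonneg.2 hμae) (sub_nonneg.2 hfd)]

end Relation

theorem IsAntipodal.exists_lt {n : ℕ} {S : Set (Fin n → ℝ)} (hS : IsAntipodal S)
    (hint : (interior (convexHull ℝ S)).Nonempty) {x y : Fin n → ℝ} (hx : x ∈ S) (hy : y ∈ S)
    (hxy : x ≠ y) :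
    ∃ f : (Fin n → ℝ) →ₗ[ℝ] ℝ, f x < f y ∧ ∀ z ∈ S, f x ≤ f z ∧ f z ≤ f y := by
  obtain ⟨f, hf0, hf⟩ := hS x hx y hy hxy
  refine ⟨f, (hf x hx).2.lt_of_ne fun hfxy => hf0 ?_, hf⟩
  refine LinearMap.eq_zero_of_forall_apply_eq_of_interior_convexHull_nonempty hint
    (c := f x) fun z hz => ?_
  exact le_antisymm (hfxy ▸ (hf z hz).2) (hf z hz).1

/-- If `S = {a,b,c,d,e} ⊆ ℝ³` is an antipodal set of five points such that the open
segment `(d,e)` meets the interior of `conv S`, then the plane through `a` parallel to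
the plane `bcd` supports `conv S` at `a`. -/
theorem antipodal_five_support_plane (a b c d e : Fin 3 → ℝ)
    (hdist : List.Pairwise (· ≠ ·) [a, b, c, d, e])
    (hS : IsAntipodal ({a, b, c, d, e} : Set (Fin 3 → ℝ)))
    (hmeet : (openSegment ℝ d e ∩
      interior (convexHull ℝ ({a, b, c, d, e} : Set (Fin 3 → ℝ)))).Nonempty) :
    ∃ f : (Fin 3 → ℝ) →ₗ[ℝ] ℝ, f ≠ 0 ∧ f b = f c ∧ f c = f d ∧
      ∀ z ∈ convexHull ℝ ({a, b, c, d, e} : Set (Fin 3 → ℝ)), f z ≤ f a := by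
  obtain ⟨p, hpde, hp⟩ := hmeet
  obtain ⟨μa, μb, μc, μe, hμa, hμb, hμc, hrel⟩ :=
    exists_smul_sub_relation_of_mem_openSegment hpde hp
  have had : a ≠ d := List.rel_of_pairwise_cons hdist (by simp)
  obtain ⟨g, hgad, hg⟩ := hS.exists_lt ⟨p, hp⟩ (by simp) (by simp) had
  have hμe : 0 < μe := pos_of_smul_sub_relation hrel hμa hμb hμc hgad
    (hg b (by simp)).2 (hg c (by simp)).2 (hg e (by simp)).2
  obtain ⟨h, hhda, hh⟩ := hS.exists_lt ⟨p, hp⟩ (by simp) (by simp) had.symm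
  have hμae : μa ≤ μe := le_of_smul_sub_relation hrel hμb hμc hμe.le hhda
    (hh b (by simp)).1 (hh c (by simp)).1 (hh e (by simp)).2
  obtain ⟨f, hf0, hfbc, hfcd, hfda⟩ :=
    exists_ne_zero_apply_eq_apply_le (K := ℝ) (by simp) a b c d
  have hfea : f e ≤ f a :=
    apply_le_of_smul_sub_relation hrel hμe hμae (hfbc.trans hfcd) hfcd hfda
  refine ⟨f, hf0, hfbc, hfcd,
    fun z hz => convexHull_min ?_ (convex_halfSpace_le f.isLinear (f a)) hz⟩
  rintro z (rfl | rfl | rfl | rfl | rfl) <;> simp only [mem_ofPred_eq] <;> linarith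
end

section
/- Let ‖·‖ be a norm on ℝ³ with unit ball B, and suppose S is an equilateral set of 6 points at distance 1 such that S splits into triples S₁ = {a₁,a₂,a₃} and S₂ = {b₁,b₂,b₃} lying in two parallel planes, where S₁ is a translate of −S₂ with a_i − a_j = b_j − b_i for all i ≠ j. Then the boundary of B contains the 1-skeleton (union of the 12 edges) of the affine regular octahedron with vertices ±(a_i − b_i), i = 1, 2, 3, and S is homothetic to {±(a₁−b₁), ±(a₂−b₂), ±(a₃−b₃)}. -/
/-!
Put `vᵢ = aᵢ - bᵢ`. The relations `aᵢ - aⱼ = bⱼ - bᵢ` say that `aᵢ + bᵢ` is a constant `2o`,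
so `aᵢ = o + vᵢ/2` and `bᵢ = o - vᵢ/2`; this is the homothety. The unit distances then read
`‖vᵢ‖ = 1` and `‖vᵢ ± vⱼ‖ = 2` for `i ≠ j`. If `‖u‖, ‖w‖ ≤ 1` and `‖u + w‖ = 2`, every point
`su + tw` of the segment `[u, w]` has norm `1`, because it and `tu + sw` have norm at most `1`
and sum to `u + w`.
-/

structure IsNorm3 (N : (Fin 3 → ℝ) → ℝ) : Prop where
  zero : N 0 = 0
  pos : ∀ x, x ≠ 0 → 0 < N x
  smul : ∀ (r : ℝ) (x), N (r • x) = |r| * N x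
  triangle : ∀ x y, N (x + y) ≤ N x + N y

open Set Function Filter Topology

def IsNorm3.toSeminorm {N : (Fin 3 → ℝ) → ℝ} (hN : IsNorm3 N) : Seminorm ℝ (Fin 3 → ℝ) :=
  Seminorm.of N hN.triangle fun r x => by rw [hN.smul, Real.norm_eq_abs]

theorem Function.injective_of_ncard_range_eq_card {ι α : Type*} [Fintype ι] {g : ι → α}
    (h : (range g).ncard = Fintype.card ι) : Injective g := by
  classical
  rw [← image_univ, ← Finset.coe_univ, ← Finset.coe_image, ncard_coe_finset] at h
  exact injOn_univ.mp (by simpa using Finset.card_image_iff.mp h)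

namespace Seminorm

variable {E : Type*} [AddCommGroup E] [Module ℝ E] (p : Seminorm ℝ E)

theorem eq_one_of_mem_segment {u w x : E} (hu : p u ≤ 1) (hw : p w ≤ 1) (huw : 2 ≤ p (u + w))
    (hx : x ∈ segment ℝ u w) : p x = 1 := by
  obtain ⟨s, t, hs, ht, hst, rfl⟩ := hx
  have convex_le_one : ∀ s t : ℝ, 0 ≤ s → 0 ≤ t → s + t = 1 → p (s • u + t • w) ≤ 1 := by
    intro s t hs ht hst
    calc p (s • u + t • w) ≤ s * p u + t * p w := by
          simpa [map_smul_eq_mul, abs_of_nonneg hs, abs_of_nonneg ht] using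
            map_add_le_add p (s • u) (t • w)
      _ ≤ s * 1 + t * 1 := by gcongr
      _ = 1 := by rw [mul_one, mul_one, hst]
  have hsplit : (s • u + t • w) + (t • u + s • w) = u + w := by
    linear_combination (norm := module) hst • (u + w)
  have := map_add_le_add p (s • u + t • w) (t • u + s • w)
  rw [hsplit] at this
  linarith [convex_le_one s t hs ht hst, convex_le_one t s ht hs (by linarith)]

theorem mem_frontier_of_eq_one [TopologicalSpace E] [ContinuousSMul ℝ E] {x : E} (hx : p x = 1) :
    x ∈ frontier {y | p y ≤ 1} := by
  refine ⟨subset_closure hx.le, fun hint => ?_⟩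
  have hlim : Tendsto (fun t : ℝ => t • x) (𝓝[>] 1) (𝓝 x) := by
    simpa using (tendsto_id.smul_const x).mono_left (nhdsWithin_le_nhds (a := (1 : ℝ)))
  have hev : ∀ᶠ t in 𝓝[>] (1 : ℝ), t • x ∈ interior {y | p y ≤ 1} ∧ 1 < t :=
    (hlim.eventually (isOpen_interior.mem_nhds hint)).and self_mem_nhdsWithin
  obtain ⟨t, ht, hlt⟩ := hev.exists
  have hle : p (t • x) ≤ 1 := interior_subset (s := {y | p y ≤ 1}) ht
  rw [map_smul_eq_mul, hx, mul_one, Real.norm_eq_abs, abs_of_pos (by linarith)] at hle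
  linarith

theorem segment_subset_frontier [TopologicalSpace E] [ContinuousSMul ℝ E] {u w : E}
    (hu : p u ≤ 1) (hw : p w ≤ 1) (huw : 2 ≤ p (u + w)) :
    segment ℝ u w ⊆ frontier {y | p y ≤ 1} :=
  fun _ hx => p.mem_frontier_of_eq_one (p.eq_one_of_mem_segment hu hw huw hx)

theorem map_sign_smul {ε : ℝ} (hε : ε = 1 ∨ ε = -1) (x : E) : p (ε • x) = p x := by
  rcases hε with rfl | rfl <;> simp

theorem map_sign_smul_add_sign_smul {ε δ : ℝ} (hε : ε = 1 ∨ ε = -1) (hδ : δ = 1 ∨ δ = -1)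
    (u w : E) : p (ε • u + δ • w) = p (u + w) ∨ p (ε • u + δ • w) = p (u - w) := by
  rcases hε with rfl | rfl <;> rcases hδ with rfl | rfl
  · simp
  · simp [← sub_eq_add_neg]
  · simp [neg_add_eq_sub, map_sub_rev]
  · rw [neg_one_smul, neg_one_smul, ← neg_add, map_neg_eq_map]; exact .inl rfl

theorem octahedron_skeleton_subset_frontier [TopologicalSpace E] [ContinuousSMul ℝ E]
    {ι : Type*} {v : ι → E} (hv : ∀ i, p (v i) ≤ 1)
    (hadd : ∀ i j, i ≠ j → 2 ≤ p (v i + v j)) (hsub : ∀ i j, i ≠ j → 2 ≤ p (v i - v j))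
    {i j : ι} (hij : i ≠ j) {ε δ : ℝ} (hε : ε = 1 ∨ ε = -1) (hδ : δ = 1 ∨ δ = -1) :
    segment ℝ (ε • v i) (δ • v j) ⊆ frontier {x | p x ≤ 1} := by
  refine p.segment_subset_frontier (by rw [p.map_sign_smul hε]; exact hv i)
    (by rw [p.map_sign_smul hδ]; exact hv j) ?_
  rcases p.map_sign_smul_add_sign_smul hε hδ (v i) (v j) with h | h <;> rw [h]
  exacts [hadd i j hij, hsub i j hij]

end Seminorm

section AntipodalTriples

variable {ι E : Type*} [AddCommGroup E] {a b : ι → E}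

theorem add_eq_add_of_sub_eq_sub_swap (htr : ∀ i j, i ≠ j → a i - a j = b j - b i) (i j : ι) :
    a i + b i = a j + b j := by
  rcases eq_or_ne i j with rfl | hij
  · rfl
  · rw [← sub_eq_zero]; linear_combination (norm := abel) htr i j hij

variable [Module ℝ E]

theorem sub_sub_sub_eq_two_smul (htr : ∀ i j, i ≠ j → a i - a j = b j - b i) {i j : ι}
    (hij : i ≠ j) : (a i - b i) - (a j - b j) = (2 : ℝ) • (a i - a j) := by
  linear_combination (norm := module) -htr i j hij

theorem sub_add_sub_eq_two_smul (htr : ∀ i j, i ≠ j → a i - a j = b j - b i) {i j : ι}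
    (hij : i ≠ j) : (a i - b i) + (a j - b j) = (2 : ℝ) • (a i - b j) := by
  linear_combination (norm := module) htr j i hij.symm

theorem half_add_half_sub_eq (hab : ∀ i, a i + b i = a k + b k) (i : ι) :
    (2 : ℝ)⁻¹ • (a k + b k) + (2 : ℝ)⁻¹ • (a i - b i) = a i := by
  rw [← hab i]; module

theorem half_add_half_neg_sub_eq (hab : ∀ i, a i + b i = a k + b k) (i : ι) :
    (2 : ℝ)⁻¹ • (a k + b k) + (2 : ℝ)⁻¹ • -(a i - b i) = b i := by
  rw [← hab i]; module

end AntipodalTriples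

theorem equilateral_six_octahedron_case_general (N : (Fin 3 → ℝ) → ℝ) (hN : IsNorm3 N)
    (a b : Fin 3 → (Fin 3 → ℝ)) (S : Set (Fin 3 → ℝ))
    (hS : S = {a 0, a 1, a 2, b 0, b 1, b 2}) (hcard : S.ncard = 6)
    (heq : ∀ x ∈ S, ∀ y ∈ S, x ≠ y → N (x - y) = 1)
    (htr : ∀ i j : Fin 3, i ≠ j → a i - a j = b j - b i) :
    (∀ i j : Fin 3, i ≠ j → ∀ ε δ : ℝ, (ε = 1 ∨ ε = -1) → (δ = 1 ∨ δ = -1) →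
      segment ℝ (ε • (a i - b i)) (δ • (a j - b j)) ⊆
        frontier {x : Fin 3 → ℝ | N x ≤ 1}) ∧
    ∃ (t : Fin 3 → ℝ) (r : ℝ), 0 < r ∧
      S = (fun x => t + r • x) ''
        ({a 0 - b 0, a 1 - b 1, a 2 - b 2,
          -(a 0 - b 0), -(a 1 - b 1), -(a 2 - b 2)} : Set (Fin 3 → ℝ)) := by
  have hrange : S = range (Sum.elim a b) := by
    rw [hS, Set.Sum.elim_range]; ext; simp [Fin.exists_fin_succ, or_assoc, eq_comm]
  have hinj : Injective (Sum.elim a b) :=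
    injective_of_ncard_range_eq_card (by rw [← hrange, hcard]; rfl)
  let p := hN.toSeminorm
  have hunit : ∀ i j, i ≠ j → p (Sum.elim a b i - Sum.elim a b j) = 1 := fun i j hij =>
    heq _ (hrange ▸ mem_range_self i) _ (hrange ▸ mem_range_self j) (hinj.ne hij)
  have hv : ∀ i, p (a i - b i) ≤ 1 := fun i => (hunit (.inl i) (.inr i) Sum.inl_ne_inr).le
  have hsub : ∀ i j, i ≠ j → 2 ≤ p ((a i - b i) - (a j - b j)) := fun i j hij => by
    rw [sub_sub_sub_eq_two_smul htr hij, map_smul_eq_mul,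
      show p (a i - a j) = 1 from hunit (.inl i) (.inl j) (Sum.inl_injective.ne hij)]
    norm_num
  have hadd : ∀ i j, i ≠ j → 2 ≤ p ((a i - b i) + (a j - b j)) := fun i j hij => by
    rw [sub_add_sub_eq_two_smul htr hij, map_smul_eq_mul,
      show p (a i - b j) = 1 from hunit (.inl i) (.inr j) Sum.inl_ne_inr]
    norm_num
  refine ⟨fun i j hij ε δ hε hδ => p.octahedron_skeleton_subset_frontier hv hadd hsub hij hε hδ,
    (2 : ℝ)⁻¹ • (a 0 + b 0), (2 : ℝ)⁻¹, by norm_num, ?_⟩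
  have hsum := add_eq_add_of_sub_eq_sub_swap htr (j := 0)
  rw [hS]
  simp only [image_insert_eq, image_singleton, half_add_half_sub_eq hsum,
    half_add_half_neg_sub_eq hsum]

/-- Let `S = {a₁,a₂,a₃,b₁,b₂,b₃}` be an equilateral set of 6 points at distance 1,
with the `aᵢ` and `bᵢ` in two parallel planes, and with `aᵢ - aⱼ = bⱼ - bᵢ` for `i ≠ j`
(`{aᵢ}` a translate of `{-bᵢ}`). Then the boundary of the unit ball contains the
1-skeleton (the 12 edges) of the affine regular octahedron with vertices `±(aᵢ - bᵢ)`,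
and `S` is homothetic to `{±(aᵢ - bᵢ) : i}`. -/
theorem equilateral_six_octahedron_case (N : (Fin 3 → ℝ) → ℝ) (hN : IsNorm3 N)
    (a b : Fin 3 → (Fin 3 → ℝ)) (S : Set (Fin 3 → ℝ))
    (hS : S = {a 0, a 1, a 2, b 0, b 1, b 2}) (hcard : S.ncard = 6)
    (heq : ∀ x ∈ S, ∀ y ∈ S, x ≠ y → N (x - y) = 1)
    (f : (Fin 3 → ℝ) →ₗ[ℝ] ℝ) (hf : f ≠ 0) (c₁ c₂ : ℝ) (hc : c₁ ≠ c₂)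
    (ha : ∀ i, f (a i) = c₁) (hb : ∀ i, f (b i) = c₂)
    (htr : ∀ i j : Fin 3, i ≠ j → a i - a j = b j - b i) :
    (∀ i j : Fin 3, i ≠ j → ∀ ε δ : ℝ, (ε = 1 ∨ ε = -1) → (δ = 1 ∨ δ = -1) →
      segment ℝ (ε • (a i - b i)) (δ • (a j - b j)) ⊆
        frontier {x : Fin 3 → ℝ | N x ≤ 1}) ∧
    ∃ (t : Fin 3 → ℝ) (r : ℝ), 0 < r ∧
      S = (fun x => t + r • x) ''
        ({a 0 - b 0, a 1 - b 1, a 2 - b 2,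
          -(a 0 - b 0), -(a 1 - b 1), -(a 2 - b 2)} : Set (Fin 3 → ℝ)) :=
  equilateral_six_octahedron_case_general N hN a b S hS hcard heq htr
end

section
/- For the norm ‖(α,β,γ)‖₁ = |α| + |β| + |γ| on ℝ³, the set {(±1,0,0), (0,±1,0), (0,0,±1)} is equilateral at distance 2, and every equilateral set in (ℝ³, ‖·‖₁) has at most 6 points. -/
/-- The `ℓ₁` norm on `ℝ³`. -/
def l1norm (x : Fin 3 → ℝ) : ℝ := |x 0| + |x 1| + |x 2|

/- ### Combinatorial kernel: clique search on patterns in {0,1,2}^4 -/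

def dg (p : ℕ) : ℕ → ℕ
  | 0 => p % 3
  | 1 => p / 3 % 3
  | 2 => p / 9 % 3
  | _ => p / 27 % 3

def SS (p : ℕ) : ℕ := dg p 0 + dg p 1 + dg p 2 + dg p 3
def ZZ (p : ℕ) : ℕ :=
  (if dg p 0 = 1 then 1 else 0) + (if dg p 1 = 1 then 1 else 0) +
  (if dg p 2 = 1 then 1 else 0) + (if dg p 3 = 1 then 1 else 0)

def clashB (p q : ℕ) : Bool :=
  (dg p 0 == 0 && dg q 0 == 2) || (dg p 0 == 2 && dg q 0 == 0) ||
  (dg p 1 == 0 && dg q 1 == 2) || (dg p 1 == 2 && dg q 1 == 0) ||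
  (dg p 2 == 0 && dg q 2 == 2) || (dg p 2 == 2 && dg q 2 == 0) ||
  (dg p 3 == 0 && dg q 3 == 2) || (dg p 3 == 2 && dg q 3 == 0)

def compatB (p q : ℕ) : Bool :=
  if ZZ p = 0 then
    if ZZ q = 0 then SS p == SS q
    else decide (SS q < SS p + ZZ q) && decide (SS p < SS q + ZZ q)
  else if ZZ q = 0 then decide (SS p < SS q + ZZ p) && decide (SS q < SS p + ZZ p)
  else decide (SS p < SS q + ZZ p + ZZ q) && decide (SS q < SS p + ZZ p + ZZ q)

def adjB (p q : ℕ) : Bool := clashB p q && compatB p q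

def goodCons (g : List ℕ → Bool) : List ℕ → Bool
  | [] => false
  | v :: r => g (r.filter (adjB v)) || goodCons g r

def good : ℕ → List ℕ → Bool
  | 0, _ => true
  | n+1, l => goodCons (good n) l

set_option maxRecDepth 100000 in
set_option maxHeartbeats 1000000 in
theorem good7 : good 7 (List.range 81) = false := by decide

theorem adjB_ne {p q : ℕ} (h : adjB p q = true) : p ≠ q := by
  rintro rfl
  simp only [adjB, clashB, Bool.and_eq_true, Bool.or_eq_true, beq_iff_eq] at h
  omega

theorem bridge : ∀ (n : ℕ) (l : List ℕ) (f : Fin n → ℕ),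
    (∀ i, f i ∈ l) → (∀ i j, i ≠ j → adjB (f i) (f j) = true) → good n l = true := by
  intro n
  induction n with
  | zero => intro l f _ _; rfl
  | succ m ihm =>
    intro l
    induction l with
    | nil =>
      intro f hmem _
      exact absurd (hmem 0) List.not_mem_nil
    | cons v r ihl =>
      intro f hmem hadj
      by_cases hv : ∃ i, f i = v
      · obtain ⟨i0, hi0⟩ := hv
        have hgood : good m (r.filter (adjB v)) = true := by
          apply ihm _ (fun j => f (i0.succAbove j))
          · intro j
            have hne : i0.succAbove j ≠ i0 := Fin.succAbove_ne i0 j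
            have hadj' : adjB (f i0) (f (i0.succAbove j)) = true :=
              hadj i0 _ (Ne.symm hne)
            have hmem' : f (i0.succAbove j) ∈ v :: r := hmem _
            have hnev : f (i0.succAbove j) ≠ v := by
              rw [← hi0]
              exact fun h => (adjB_ne hadj') h.symm
            rw [List.mem_filter]
            refine ⟨?_, by rw [← hi0]; exact hadj'⟩
            rcases List.mem_cons.1 hmem' with h | h
            · exact absurd h hnev
            · exact h
          · intro a b hab
            exact hadj _ _ (fun h => hab (Fin.succAbove_right_injective h))
        show (good m (r.filter (adjB v)) || good (m+1) r) = true
        rw [hgood, Bool.true_or]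
      · push_neg at hv
        have hmem' : ∀ i, f i ∈ r := by
          intro i
          rcases List.mem_cons.1 (hmem i) with h | h
          · exact absurd h (hv i)
          · exact h
        have := ihl f hmem' hadj
        show (good m (r.filter (adjB v)) || good (m+1) r) = true
        rw [this, Bool.or_true]

/- ### The four linear forms on ℝ³ -/

def Lf : Fin 4 → (Fin 3 → ℝ) → ℝ
  | 0, u => u 0 + u 1 + u 2
  | 1, u => u 0 + u 1 - u 2
  | 2, u => u 0 - u 1 + u 2
  | 3, u => u 0 - u 1 - u 2

def sg : Fin 4 → ℝ
  | 0 => 1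
  | 1 => -1
  | 2 => -1
  | 3 => 1

theorem Lf_sub (k : Fin 4) (x y : Fin 3 → ℝ) : Lf k (x - y) = Lf k x - Lf k y := by
  fin_cases k <;> simp [Lf] <;> ring

theorem abs_Lf_le (k : Fin 4) (u : Fin 3 → ℝ) : |Lf k u| ≤ l1norm u := by
  fin_cases k <;>
    · simp only [Lf, l1norm]
      rw [abs_le]
      constructor <;>
        nlinarith [le_abs_self (u 0), neg_abs_le (u 0), le_abs_self (u 1), neg_abs_le (u 1),
          le_abs_self (u 2), neg_abs_le (u 2)]

theorem exists_Lf_eq (u : Fin 3 → ℝ) : ∃ k, |Lf k u| = l1norm u := by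
  rcases le_or_gt 0 (u 0) with h0 | h0 <;> rcases le_or_gt 0 (u 1) with h1 | h1 <;>
    rcases le_or_gt 0 (u 2) with h2 | h2
  · refine ⟨0, ?_⟩
    simp only [Lf, l1norm]
    rw [abs_of_nonneg h0, abs_of_nonneg h1, abs_of_nonneg h2, abs_of_nonneg (by linarith)]
  · refine ⟨1, ?_⟩
    simp only [Lf, l1norm]
    rw [abs_of_nonneg h0, abs_of_nonneg h1, abs_of_nonpos h2.le, abs_of_nonneg (by linarith)]
    ring
  · refine ⟨2, ?_⟩
    simp only [Lf, l1norm]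
    rw [abs_of_nonneg h0, abs_of_nonpos h1.le, abs_of_nonneg h2, abs_of_nonneg (by linarith)]
    ring
  · refine ⟨3, ?_⟩
    simp only [Lf, l1norm]
    rw [abs_of_nonneg h0, abs_of_nonpos h1.le, abs_of_nonpos h2.le, abs_of_nonneg (by linarith)]
    ring
  · refine ⟨3, ?_⟩
    simp only [Lf, l1norm]
    rw [abs_of_nonpos h0.le, abs_of_nonneg h1, abs_of_nonneg h2, abs_of_nonpos (by linarith)]
    ring
  · refine ⟨2, ?_⟩
    simp only [Lf, l1norm]
    rw [abs_of_nonpos h0.le, abs_of_nonneg h1, abs_of_nonpos h2.le, abs_of_nonpos (by linarith)]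
    ring
  · refine ⟨1, ?_⟩
    simp only [Lf, l1norm]
    rw [abs_of_nonpos h0.le, abs_of_nonpos h1.le, abs_of_nonneg h2, abs_of_nonpos (by linarith)]
    ring
  · refine ⟨0, ?_⟩
    simp only [Lf, l1norm]
    rw [abs_of_nonpos h0.le, abs_of_nonpos h1.le, abs_of_nonpos h2.le, abs_of_nonpos (by linarith)]
    ring

theorem Lf_rel (u : Fin 3 → ℝ) : Lf 0 u + Lf 3 u = Lf 1 u + Lf 2 u := by
  simp only [Lf]; ring

/- ### The core combinatorial lemma over ℝ -/

theorem or4 {P : Fin 4 → Prop} (k : Fin 4) (h : P k) : P 0 ∨ P 1 ∨ P 2 ∨ P 3 := by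
  rcases k with ⟨kv, hk⟩
  have hv : kv = 0 ∨ kv = 1 ∨ kv = 2 ∨ kv = 3 := by omega
  rcases hv with rfl | rfl | rfl | rfl
  · exact Or.inl h
  · exact Or.inr (Or.inl h)
  · exact Or.inr (Or.inr (Or.inl h))
  · exact Or.inr (Or.inr (Or.inr h))

theorem compatB_true {p q : ℕ}
    (h : (ZZ p = 0 ∧ ZZ q = 0 ∧ SS p = SS q) ∨
         (ZZ p = 0 ∧ 0 < ZZ q ∧ SS q < SS p + ZZ q ∧ SS p < SS q + ZZ q) ∨
         (0 < ZZ p ∧ ZZ q = 0 ∧ SS p < SS q + ZZ p ∧ SS q < SS p + ZZ p) ∨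
         (0 < ZZ p ∧ 0 < ZZ q ∧ SS p < SS q + ZZ p + ZZ q ∧ SS q < SS p + ZZ p + ZZ q)) :
    compatB p q = true := by
  unfold compatB
  rcases h with ⟨h1,h2,h3⟩|⟨h1,h2,h3,h4⟩|⟨h1,h2,h3,h4⟩|⟨h1,h2,h3,h4⟩
  · rw [if_pos h1, if_pos h2]
    simp [h3]
  · rw [if_pos h1, if_neg (by omega)]
    simp [h3, h4]
  · rw [if_neg (by omega), if_pos h2]
    simp [h3, h4]
  · rw [if_neg (by omega), if_neg (by omega)]
    simp [h3, h4]

theorem clashB_true {p q : ℕ}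
    (h : (dg p 0 = 0 ∧ dg q 0 = 2) ∨ (dg p 0 = 2 ∧ dg q 0 = 0) ∨
         (dg p 1 = 0 ∧ dg q 1 = 2) ∨ (dg p 1 = 2 ∧ dg q 1 = 0) ∨
         (dg p 2 = 0 ∧ dg q 2 = 2) ∨ (dg p 2 = 2 ∧ dg q 2 = 0) ∨
         (dg p 3 = 0 ∧ dg q 3 = 2) ∨ (dg p 3 = 2 ∧ dg q 3 = 0)) :
    clashB p q = true := by
  unfold clashB
  simp only [Bool.or_eq_true, Bool.and_eq_true, beq_iff_eq]
  rcases h with ⟨ha,hb⟩|⟨ha,hb⟩|⟨ha,hb⟩|⟨ha,hb⟩|⟨ha,hb⟩|⟨ha,hb⟩|⟨ha,hb⟩|⟨ha,hb⟩ <;>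
    simp [ha, hb]

theorem core (e : Fin 7 → Fin 4 → ℝ) (C : ℝ)
    (habs : ∀ i k, |e i k| ≤ 1)
    (hsum : ∀ i, e i 0 + e i 1 + e i 2 + e i 3 = C)
    (hclash : ∀ i j, i ≠ j → ∃ k, (e i k = 1 ∧ e j k = -1) ∨ (e i k = -1 ∧ e j k = 1)) :
    False := by
  classical
  set c : Fin 7 → Fin 4 → ℕ :=
    fun i k => if e i k = 1 then 2 else if e i k = -1 then 0 else 1 with hc
  have hc2 : ∀ i k, c i k ≤ 2 := by
    intro i k; simp only [hc]; split_ifs <;> omega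
  have hce2 : ∀ i k, c i k = 2 → e i k = 1 := by
    intro i k h; simp only [hc] at h; split_ifs at h with h1 h2
    · exact h1
    · omega
  have hce0 : ∀ i k, c i k = 0 → e i k = -1 := by
    intro i k h; simp only [hc] at h
    by_cases h1 : e i k = 1
    · rw [if_pos h1] at h; exact absurd h (by norm_num)
    · rw [if_neg h1] at h
      by_cases h2 : e i k = -1
      · exact h2
      · rw [if_neg h2] at h; exact absurd h (by norm_num)
  have hce1 : ∀ i k, c i k = 1 → -1 < e i k ∧ e i k < 1 := by
    intro i k h; simp only [hc] at h
    by_cases h1 : e i k = 1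
    · rw [if_pos h1] at h; exact absurd h (by norm_num)
    · by_cases h2 : e i k = -1
      · rw [if_neg h1, if_pos h2] at h; exact absurd h (by norm_num)
      · have hab := abs_le.1 (habs i k)
        exact ⟨lt_of_le_of_ne hab.1 (fun hh => h2 hh.symm), lt_of_le_of_ne hab.2 h1⟩
  have hec1 : ∀ i k, e i k = 1 → c i k = 2 := by
    intro i k h; simp only [hc]; rw [if_pos h]
  have hecm1 : ∀ i k, e i k = -1 → c i k = 0 := by
    intro i k h; simp only [hc]
    rw [if_neg (by rw [h]; norm_num), if_pos h]
  have heq : ∀ i k, c i k ≠ 1 → e i k = (c i k : ℝ) - 1 := by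
    intro i k h
    have h2 := hc2 i k
    rcases (by omega : c i k = 0 ∨ c i k = 2) with h0 | h0
    · rw [hce0 i k h0, h0]; norm_num
    · rw [hce2 i k h0, h0]; norm_num
  set q : Fin 7 → ℕ := fun i => c i 0 + 3 * c i 1 + 9 * c i 2 + 27 * c i 3 with hq
  have hb : ∀ i, c i 0 ≤ 2 ∧ c i 1 ≤ 2 ∧ c i 2 ≤ 2 ∧ c i 3 ≤ 2 :=
    fun i => ⟨hc2 i 0, hc2 i 1, hc2 i 2, hc2 i 3⟩
  have hdg0 : ∀ i, dg (q i) 0 = c i 0 := by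
    intro i; have := hb i; simp only [hq, dg]; omega
  have hdg1 : ∀ i, dg (q i) 1 = c i 1 := by
    intro i; have := hb i; simp only [hq, dg]; omega
  have hdg2 : ∀ i, dg (q i) 2 = c i 2 := by
    intro i; have := hb i; simp only [hq, dg]; omega
  have hdg3 : ∀ i, dg (q i) 3 = c i 3 := by
    intro i; have := hb i; simp only [hq, dg]; omega
  have hSS : ∀ i, SS (q i) = c i 0 + c i 1 + c i 2 + c i 3 := by
    intro i; simp only [SS, hdg0, hdg1, hdg2, hdg3]
  have hZZ : ∀ i, ZZ (q i) = (if c i 0 = 1 then 1 else 0) + (if c i 1 = 1 then 1 else 0) +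
      (if c i 2 = 1 then 1 else 0) + (if c i 3 = 1 then 1 else 0) := by
    intro i; simp only [ZZ, hdg0, hdg1, hdg2, hdg3]
  -- interval facts
  have hintz : ∀ i, ZZ (q i) = 0 → (SS (q i) : ℝ) = C + 4 := by
    intro i hz0
    have hz' := hz0; rw [hZZ i] at hz'
    have hne0 : c i 0 ≠ 1 := by intro h; split_ifs at hz' <;> omega
    have hne1 : c i 1 ≠ 1 := by intro h; split_ifs at hz' <;> omega
    have hne2 : c i 2 ≠ 1 := by intro h; split_ifs at hz' <;> omega
    have hne3 : c i 3 ≠ 1 := by intro h; split_ifs at hz' <;> omega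
    have e0 := heq i 0 hne0; have e1 := heq i 1 hne1
    have e2 := heq i 2 hne2; have e3 := heq i 3 hne3
    have hs := hsum i
    rw [hSS i]; push_cast; linarith
  have hintp : ∀ i, 0 < ZZ (q i) →
      (SS (q i) : ℝ) - 4 - (ZZ (q i) : ℝ) < C ∧ C < (SS (q i) : ℝ) - 4 + (ZZ (q i) : ℝ) := by
    intro i hzpos
    have hZr : (ZZ (q i) : ℝ) = (if c i 0 = 1 then (1:ℝ) else 0) +
        (if c i 1 = 1 then (1:ℝ) else 0) + (if c i 2 = 1 then (1:ℝ) else 0) +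
        (if c i 3 = 1 then (1:ℝ) else 0) := by
      rw [hZZ i]; push_cast; rfl
    have hSr : (SS (q i) : ℝ) = (c i 0 : ℝ) + (c i 1 : ℝ) + (c i 2 : ℝ) + (c i 3 : ℝ) := by
      rw [hSS i]; push_cast; ring
    have hup : ∀ k : Fin 4, e i k ≤ ((c i k : ℝ) - 1) + (if c i k = 1 then (1:ℝ) else 0) := by
      intro k
      by_cases h : c i k = 1
      · rw [if_pos h, h]; push_cast; linarith [(hce1 i k h).2]
      · rw [if_neg h, heq i k h]; linarith
    have hlo : ∀ k : Fin 4, ((c i k : ℝ) - 1) - (if c i k = 1 then (1:ℝ) else 0) ≤ e i k := by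
      intro k
      by_cases h : c i k = 1
      · rw [if_pos h, h]; push_cast; linarith [(hce1 i k h).1]
      · rw [if_neg h, heq i k h]; linarith
    have hex : c i 0 = 1 ∨ c i 1 = 1 ∨ c i 2 = 1 ∨ c i 3 = 1 := by
      by_contra h
      push_neg at h
      rw [hZZ i, if_neg h.1, if_neg h.2.1, if_neg h.2.2.1, if_neg h.2.2.2] at hzpos
      omega
    have hs := hsum i
    have h0 := hup 0; have h1 := hup 1; have h2 := hup 2; have h3 := hup 3
    have g0 := hlo 0; have g1 := hlo 1; have g2 := hlo 2; have g3 := hlo 3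
    rcases hex with hk | hk | hk | hk
    · have hst := hce1 i 0 hk
      have hcast : (c i 0 : ℝ) = 1 := by rw [hk]; norm_num
      rw [if_pos hk] at h0 g0
      constructor <;> (rw [hSr, hZr]; rw [if_pos hk]) <;> linarith
    · have hst := hce1 i 1 hk
      have hcast : (c i 1 : ℝ) = 1 := by rw [hk]; norm_num
      rw [if_pos hk] at h1 g1
      constructor <;> (rw [hSr, hZr]; rw [if_pos hk]) <;> linarith
    · have hst := hce1 i 2 hk
      have hcast : (c i 2 : ℝ) = 1 := by rw [hk]; norm_num
      rw [if_pos hk] at h2 g2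
      constructor <;> (rw [hSr, hZr]; rw [if_pos hk]) <;> linarith
    · have hst := hce1 i 3 hk
      have hcast : (c i 3 : ℝ) = 1 := by rw [hk]; norm_num
      rw [if_pos hk] at h3 g3
      constructor <;> (rw [hSr, hZr]; rw [if_pos hk]) <;> linarith
  -- adjacency
  have hadj : ∀ i j, i ≠ j → adjB (q i) (q j) = true := by
    intro i j hij
    have hcl : clashB (q i) (q j) = true := by
      obtain ⟨k, hk⟩ := hclash i j hij
      apply clashB_true
      rw [hdg0, hdg0, hdg1, hdg1, hdg2, hdg2, hdg3, hdg3]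
      rcases hk with ⟨h1, h2⟩ | ⟨h1, h2⟩
      · have hor := or4 (P := fun m => c i m = 2 ∧ c j m = 0) k
          ⟨hec1 i k h1, hecm1 j k h2⟩
        rcases hor with h | h | h | h
        · exact Or.inr (Or.inl h)
        · exact Or.inr (Or.inr (Or.inr (Or.inl h)))
        · exact Or.inr (Or.inr (Or.inr (Or.inr (Or.inr (Or.inl h)))))
        · exact Or.inr (Or.inr (Or.inr (Or.inr (Or.inr (Or.inr (Or.inr h))))))
      · have hor := or4 (P := fun m => c i m = 0 ∧ c j m = 2) k
          ⟨hecm1 i k h1, hec1 j k h2⟩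
        rcases hor with h | h | h | h
        · exact Or.inl h
        · exact Or.inr (Or.inr (Or.inl h))
        · exact Or.inr (Or.inr (Or.inr (Or.inr (Or.inl h))))
        · exact Or.inr (Or.inr (Or.inr (Or.inr (Or.inr (Or.inr (Or.inl h))))))
    have hcp : compatB (q i) (q j) = true := by
      rcases Nat.eq_zero_or_pos (ZZ (q i)) with hzi | hzi <;>
        rcases Nat.eq_zero_or_pos (ZZ (q j)) with hzj | hzj
      · have hi' := hintz i hzi
        have hj' := hintz j hzj
        have hss : SS (q i) = SS (q j) := by
          have : (SS (q i) : ℝ) = (SS (q j) : ℝ) := by rw [hi', hj']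
          exact_mod_cast this
        exact compatB_true (Or.inl ⟨hzi, hzj, hss⟩)
      · have hi' := hintz i hzi
        have hj' := hintp j hzj
        have hA : SS (q j) < SS (q i) + ZZ (q j) := by
          have : (SS (q j) : ℝ) < (SS (q i) : ℝ) + (ZZ (q j) : ℝ) := by linarith [hj'.1]
          exact_mod_cast this
        have hB : SS (q i) < SS (q j) + ZZ (q j) := by
          have : (SS (q i) : ℝ) < (SS (q j) : ℝ) + (ZZ (q j) : ℝ) := by linarith [hj'.2]
          exact_mod_cast this
        exact compatB_true (Or.inr (Or.inl ⟨hzi, hzj, hA, hB⟩))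
      · have hi' := hintp i hzi
        have hj' := hintz j hzj
        have hA : SS (q i) < SS (q j) + ZZ (q i) := by
          have : (SS (q i) : ℝ) < (SS (q j) : ℝ) + (ZZ (q i) : ℝ) := by linarith [hi'.1]
          exact_mod_cast this
        have hB : SS (q j) < SS (q i) + ZZ (q i) := by
          have : (SS (q j) : ℝ) < (SS (q i) : ℝ) + (ZZ (q i) : ℝ) := by linarith [hi'.2]
          exact_mod_cast this
        exact compatB_true (Or.inr (Or.inr (Or.inl ⟨hzi, hzj, hA, hB⟩)))
      · have hi' := hintp i hzi
        have hj' := hintp j hzj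
        have hA : SS (q i) < SS (q j) + ZZ (q i) + ZZ (q j) := by
          have : (SS (q i) : ℝ) < (SS (q j) : ℝ) + (ZZ (q i) : ℝ) + (ZZ (q j) : ℝ) := by
            linarith [hi'.2, hj'.1]
          exact_mod_cast this
        have hB : SS (q j) < SS (q i) + ZZ (q i) + ZZ (q j) := by
          have : (SS (q j) : ℝ) < (SS (q i) : ℝ) + (ZZ (q i) : ℝ) + (ZZ (q j) : ℝ) := by
            linarith [hj'.2, hi'.1]
          exact_mod_cast this
        exact compatB_true (Or.inr (Or.inr (Or.inr ⟨hzi, hzj, hA, hB⟩)))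
    rw [adjB, hcl, hcp]; rfl
  have hmem : ∀ i, q i ∈ List.range 81 := by
    intro i
    rw [List.mem_range]
    have := hb i
    simp only [hq]
    omega
  have := bridge 7 (List.range 81) q hmem hadj
  rw [good7] at this
  exact Bool.false_ne_true this

/- ### No seven equilateral points -/

theorem sg_vals (k : Fin 4) : sg k = 1 ∨ sg k = -1 := by
  rcases k with ⟨kv, hk⟩
  have hv : kv = 0 ∨ kv = 1 ∨ kv = 2 ∨ kv = 3 := by omega
  rcases hv with rfl | rfl | rfl | rfl
  · exact Or.inl rfl
  · exact Or.inr rfl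
  · exact Or.inr rfl
  · exact Or.inl rfl

theorem sg_abs (k : Fin 4) : |sg k| = 1 := by
  rcases sg_vals k with h | h <;> rw [h] <;> norm_num

theorem no_seven (lam : ℝ) (hlam : 0 < lam) (x : Fin 7 → Fin 3 → ℝ)
    (hx : ∀ i j, i ≠ j → l1norm (x i - x j) = lam) : False := by
  classical
  set v : Fin 7 → Fin 4 → ℝ := fun i k => Lf k (x i) with hv
  have hne : (Finset.univ : Finset (Fin 7)).Nonempty := Finset.univ_nonempty
  set lo : Fin 4 → ℝ := fun k => Finset.univ.inf' hne (fun i => v i k) with hlo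
  set hi : Fin 4 → ℝ := fun k => Finset.univ.sup' hne (fun i => v i k) with hhi
  have hlov : ∀ i k, lo k ≤ v i k := by
    intro i k
    simp only [hlo]
    exact Finset.inf'_le _ (Finset.mem_univ i)
  have hvhi : ∀ i k, v i k ≤ hi k := by
    intro i k
    simp only [hhi]
    exact Finset.le_sup' (fun i => v i k) (Finset.mem_univ i)
  have hwidth : ∀ k, hi k ≤ lo k + lam := by
    intro k
    obtain ⟨a, -, ha⟩ := Finset.exists_mem_eq_sup' hne (fun i => v i k)
    obtain ⟨b, -, hb⟩ := Finset.exists_mem_eq_inf' hne (fun i => v i k)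
    have ha' : hi k = v a k := by simp only [hhi]; exact ha
    have hb' : lo k = v b k := by simp only [hlo]; exact hb
    by_cases hab : a = b
    · subst hab
      rw [ha', hb']
      linarith
    · have hd : |Lf k (x a - x b)| ≤ lam := by
        rw [← hx a b hab]
        exact abs_Lf_le k _
      rw [Lf_sub] at hd
      have hd2 := abs_le.1 hd
      have hva : Lf k (x a) = v a k := by simp only [hv]
      have hvb : Lf k (x b) = v b k := by simp only [hv]
      rw [hva, hvb] at hd2
      rw [ha', hb']
      linarith [hd2.2]
  set ee : Fin 7 → Fin 4 → ℝ := fun i k => (2 * v i k - (lo k + hi k)) * sg k / lam with hee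
  apply core ee (((lo 1 + hi 1) + (lo 2 + hi 2) - (lo 0 + hi 0) - (lo 3 + hi 3)) / lam)
  · intro i k
    have h1 := hlov i k
    have h2 := hvhi i k
    have h3 := hwidth k
    have habs1 : |2 * v i k - (lo k + hi k)| ≤ lam := by
      rw [abs_le]
      constructor <;> linarith
    have : ee i k = (2 * v i k - (lo k + hi k)) * sg k / lam := by simp only [hee]
    rw [this, abs_div, abs_mul, sg_abs, mul_one, abs_of_pos hlam, div_le_one hlam]
    exact habs1
  · intro i
    have hrel0 := Lf_rel (x i)
    have hrel : v i 0 + v i 3 - v i 1 - v i 2 = 0 := by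
      simp only [hv]
      linarith
    have h0 : ee i 0 = (2 * v i 0 - (lo 0 + hi 0)) * 1 / lam := by
      simp only [hee]; norm_num [sg]
    have h1 : ee i 1 = (2 * v i 1 - (lo 1 + hi 1)) * (-1) / lam := by
      simp only [hee]; norm_num [sg]
    have h2 : ee i 2 = (2 * v i 2 - (lo 2 + hi 2)) * (-1) / lam := by
      simp only [hee]; norm_num [sg]
    have h3 : ee i 3 = (2 * v i 3 - (lo 3 + hi 3)) * 1 / lam := by
      simp only [hee]; norm_num [sg]
    rw [h0, h1, h2, h3]
    field_simp
    linarith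
  · intro i j hij
    obtain ⟨k, hk⟩ := exists_Lf_eq (x i - x j)
    rw [hx i j hij, Lf_sub] at hk
    have hk' : |v i k - v j k| = lam := by
      have hva : Lf k (x i) = v i k := by simp only [hv]
      have hvb : Lf k (x j) = v j k := by simp only [hv]
      rw [hva, hvb] at hk
      exact hk
    rcases (abs_eq hlam.le).1 hk' with h | h
    · have e1 : v i k = hi k := by linarith [hlov i k, hlov j k, hvhi i k, hvhi j k, hwidth k]
      have e2 : v j k = lo k := by linarith [hlov i k, hlov j k, hvhi i k, hvhi j k, hwidth k]
      have hil : hi k = lo k + lam := by linarith [hlov i k, hlov j k, hvhi i k, hvhi j k, hwidth k]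
      have hei : ee i k = sg k := by
        have : ee i k = (2 * v i k - (lo k + hi k)) * sg k / lam := by simp only [hee]
        rw [this, e1, hil]
        field_simp
        ring
      have hej : ee j k = -sg k := by
        have : ee j k = (2 * v j k - (lo k + hi k)) * sg k / lam := by simp only [hee]
        rw [this, e2, hil]
        field_simp
        ring
      rcases sg_vals k with h' | h'
      · exact ⟨k, Or.inl ⟨by simp [hei, h'], by simp [hej, h']⟩⟩
      · exact ⟨k, Or.inr ⟨by simp [hei, h'], by simp [hej, h']⟩⟩
    · have e1 : v j k = hi k := by linarith [hlov i k, hlov j k, hvhi i k, hvhi j k, hwidth k]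
      have e2 : v i k = lo k := by linarith [hlov i k, hlov j k, hvhi i k, hvhi j k, hwidth k]
      have hil : hi k = lo k + lam := by linarith [hlov i k, hlov j k, hvhi i k, hvhi j k, hwidth k]
      have hej : ee j k = sg k := by
        have : ee j k = (2 * v j k - (lo k + hi k)) * sg k / lam := by simp only [hee]
        rw [this, e1, hil]
        field_simp
        ring
      have hei : ee i k = -sg k := by
        have : ee i k = (2 * v i k - (lo k + hi k)) * sg k / lam := by simp only [hee]
        rw [this, e2, hil]
        field_simp
        ring
      rcases sg_vals k with h' | h'
      · exact ⟨k, Or.inr ⟨by simp [hei, h'], by simp [hej, h']⟩⟩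
      · exact ⟨k, Or.inl ⟨by simp [hei, h'], by simp [hej, h']⟩⟩

/-- In `ℓ₁³` the set `{±(1,0,0), ±(0,1,0), ±(0,0,1)}` is equilateral at distance 2,
and every equilateral set has at most 6 points. -/
theorem l1_equilateral_six :
    (∀ x ∈ ({![1,0,0], ![-1,0,0], ![0,1,0], ![0,-1,0], ![0,0,1], ![0,0,-1]} :
        Set (Fin 3 → ℝ)),
      ∀ y ∈ ({![1,0,0], ![-1,0,0], ![0,1,0], ![0,-1,0], ![0,0,1], ![0,0,-1]} :
        Set (Fin 3 → ℝ)), x ≠ y → l1norm (x - y) = 2) ∧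
    (∀ (S : Set (Fin 3 → ℝ)) (lam : ℝ), 0 < lam →
      (∀ x ∈ S, ∀ y ∈ S, x ≠ y → l1norm (x - y) = lam) →
      S.Finite ∧ S.ncard ≤ 6) := by
  constructor
  · intro x hx y hy hxy
    simp only [Set.mem_insert_iff, Set.mem_singleton_iff] at hx hy
    rcases hx with rfl | rfl | rfl | rfl | rfl | rfl <;>
      rcases hy with rfl | rfl | rfl | rfl | rfl | rfl <;>
      first
        | exact absurd rfl hxy
        | norm_num [l1norm, Pi.sub_apply, Matrix.cons_val_zero, Matrix.cons_val_one,
            Matrix.head_cons, Matrix.cons_val_two, Matrix.tail_cons]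
  · intro S lam hlam heq
    have key : ∀ T : Finset (Fin 3 → ℝ), ↑T ⊆ S → T.card ≤ 6 := by
      intro T hTS
      by_contra hgt
      push_neg at hgt
      obtain ⟨T', hsub, hcard⟩ := Finset.exists_subset_card_eq (s := T) (n := 7) (by omega)
      have hT'S : (T' : Set (Fin 3 → ℝ)) ⊆ S := fun a ha => hTS (hsub ha)
      set f : Fin 7 → (Fin 3 → ℝ) := fun i => ((Finset.equivFinOfCardEq hcard).symm i : Fin 3 → ℝ)
        with hf
      apply no_seven lam hlam f
      intro i j hij
      apply heq
      · exact hT'S ((Finset.equivFinOfCardEq hcard).symm i).2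
      · exact hT'S ((Finset.equivFinOfCardEq hcard).symm j).2
      · intro hfij
        apply hij
        have := Subtype.coe_injective (a₁ := (Finset.equivFinOfCardEq hcard).symm i)
          (a₂ := (Finset.equivFinOfCardEq hcard).symm j) hfij
        exact (Finset.equivFinOfCardEq hcard).symm.injective this
    have hfin : S.Finite := by
      by_contra hinf
      obtain ⟨T, hTS, hcard⟩ := Set.Infinite.exists_subset_card_eq hinf 7
      have := key T hTS
      omega
    refine ⟨hfin, ?_⟩
    have h6 := key hfin.toFinset (by simp)
    rwa [Set.ncard_eq_toFinset_card S hfin]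
end
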